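/- arXiv:1705.00415 — 3 statements merged into one kernel-verified Lean document; each statement's English description precedes it below -/
import Mathlib

section
/- In the balanced parentheses sequence B of a rooted ordered tree, vertex v (identified by its preorder rank, excluding the root handled separately) satisfies: the position select_0(v-1) in B is the opening parenthesis of the edge from v's parent to v, and the subtree of v corresponds exactly to the interval [select_0(v-1), match(select_0(v-1))]. -/
/-- A balanced parentheses sequence over `Bool`, where `false` is an opening
parenthesis (`0`) and `true` a closing parenthesis (`1`): every prefix has at
least as many openings as closings, and the totals are equal. -/
def BalancedSeq (s : List Bool) : Prop :=
  (∀ k, (s.take k).count true ≤ (s.take k).count false) ∧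
    s.count false = s.count true

/-- Rooted ordered trees: a root together with an ordered list of subtrees. -/
inductive OTree : Type where
  | node : List OTree → OTree

/-- Number of vertices of a rooted ordered tree. -/
def OTree.size : OTree → ℕ
  | .node cs => 1 + (cs.attach.map (fun c => OTree.size c.1)).sum
decreasing_by
  have := List.sizeOf_lt_of_mem c.2
  simp only [OTree.node.sizeOf_spec]
  omega

/-- The balanced-parentheses sequence of a rooted ordered tree obtained by a
depth-first traversal: a `false` (`0`, open) the first time an edge is
traversed toward a child and a `true` (`1`, close) when it is traversed back. -/
def OTree.bp : OTree → List Bool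
  | .node cs => (cs.attach.map (fun c => false :: (OTree.bp c.1 ++ [true]))).flatten
decreasing_by
  have := List.sizeOf_lt_of_mem c.2
  simp only [OTree.node.sizeOf_spec]
  omega

/-- Preorder list of the subtrees rooted at each vertex (the `i`-th entry is
the subtree of the `(i+1)`-st vertex in preorder, `0`-indexed). -/
def OTree.preorderList : OTree → List OTree
  | .node cs =>
      .node cs :: (cs.attach.map (fun c => OTree.preorderList c.1)).flatten
decreasing_by
  have := List.sizeOf_lt_of_mem c.2
  simp only [OTree.node.sizeOf_spec]
  omega

/-- Excess of openings over closings in the length-`k` prefix. -/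
def parenDepth (s : List Bool) (k : ℕ) : ℤ :=
  ((s.take k).count false : ℤ) - ((s.take k).count true : ℤ)

/-- `i` is an opening parenthesis matched with the closing parenthesis `j`. -/
def MatchedPair (s : List Bool) (i j : ℕ) : Prop :=
  i < j ∧ j < s.length ∧ s[i]? = some false ∧ s[j]? = some true ∧
    parenDepth s (j + 1) = parenDepth s i ∧
    ∀ k, i < k → k ≤ j → parenDepth s i < parenDepth s k

/-! The sequence `B` of `node cs` is the concatenation of the blocks `0 · bp(c) · 1` over the
children `c`, and its preorder list (after the root) is the concatenation of the children's
preorder lists. Each block contains as many `0`s as its tree has vertices, so by induction the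
block of the `k`-th non-root vertex in preorder starts at the `k`-th `0` of `B`; a `0` is determined
by its rank, so that position is `p`. As `bp(s)` is balanced, the `1` closing the block of `s` is
the first return of the depth to its value before `p`, i.e. the match of `p`. -/

section Parentheses

variable {s u w x : List Bool} {p q : ℕ}

theorem parenDepth_append_of_le (w : List Bool) {m : ℕ} (h : m ≤ u.length) :
    parenDepth (u ++ w) m = parenDepth u m := by
  simp only [parenDepth, List.take_append_of_le_length h]

theorem parenDepth_add (x : List Bool) (p m : ℕ) :
    parenDepth x (p + m) = parenDepth x p + parenDepth (x.drop p) m := by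
  simp only [parenDepth, List.take_add, List.count_append]
  push_cast; ring

theorem parenDepth_cons_false_succ (u : List Bool) (m : ℕ) :
    parenDepth (false :: u) (m + 1) = parenDepth u m + 1 := by
  simp only [parenDepth, List.take_succ_cons, List.count_cons_self,
    List.count_cons_of_ne Bool.false_ne_true]
  push_cast; ring

theorem BalancedSeq.parenDepth_nonneg (h : BalancedSeq s) (k : ℕ) : 0 ≤ parenDepth s k := by
  have := h.1 k
  simp only [parenDepth]; omega

theorem BalancedSeq.parenDepth_length (h : BalancedSeq s) : parenDepth s s.length = 0 := by
  simp only [parenDepth, List.take_length, h.2, sub_self]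

theorem BalancedSeq.nil : BalancedSeq [] := ⟨by simp, rfl⟩

theorem BalancedSeq.append (hu : BalancedSeq u) (hw : BalancedSeq w) : BalancedSeq (u ++ w) := by
  refine ⟨fun k => ?_, by simp only [List.count_append, hu.2, hw.2]⟩
  rcases le_or_gt k u.length with h | h
  · rw [List.take_append_of_le_length h]; exact hu.1 k
  · rw [List.take_append, List.take_of_length_le h.le, List.count_append, List.count_append]
    have := hw.1 (k - u.length)
    have := hu.2
    omega

theorem BalancedSeq.flatten {L : List (List Bool)} (h : ∀ u ∈ L, BalancedSeq u) :
    BalancedSeq L.flatten := by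
  induction L with
  | nil => exact .nil
  | cons u L ih =>
    exact (h u List.mem_cons_self).append (ih fun w hw => h w (List.mem_cons_of_mem u hw))

theorem BalancedSeq.cons_false_append_true (hu : BalancedSeq u) :
    BalancedSeq (false :: (u ++ [true])) := by
  refine ⟨fun k => ?_, by simp [List.count_append, hu.2]⟩
  cases k with
  | zero => simp
  | succ k =>
    rw [List.take_succ_cons, List.take_append]
    have hu1 := hu.1 k
    have h1 : (List.take (k - u.length) [true]).count true ≤ 1 :=
      List.count_le_length.trans (by simp)
    simp only [List.count_cons, List.count_append, beq_true, BEq.rfl, Bool.false_eq_true,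
      ↓reduceIte, add_zero]
    omega

theorem count_false_take_lt (hp : x[p]? = some false) (hpq : p < q) :
    (x.take p).count false < (x.take q).count false := by
  have hsucc : (x.take (p + 1)).count false = (x.take p).count false + 1 := by
    rw [List.take_add_one, hp, List.count_append]; simp
  have hmono : (x.take (p + 1)).count false ≤ (x.take q).count false :=
    (List.take_sublist_take_left (by omega)).count_le false
  omega

theorem eq_of_count_false_take_eq (hp : x[p]? = some false) (hq : x[q]? = some false)
    (h : (x.take p).count false = (x.take q).count false) : p = q := by
  rcases lt_trichotomy p q with hpq | rfl | hqp
  · exact absurd h (count_false_take_lt hp hpq).ne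
  · rfl
  · exact absurd h (count_false_take_lt hq hqp).ne'

theorem matchedPair_of_prefix (hu : BalancedSeq u) (h : false :: (u ++ [true]) <+: x.drop p) :
    MatchedPair x p (p + u.length + 1) := by
  obtain ⟨r, hr⟩ := h
  have hlen : p + u.length + 2 ≤ x.length := by
    have := congrArg List.length hr
    simp only [List.length_append, List.length_cons, List.length_drop] at this
    omega
  have hget (i : ℕ) : x[p + i]? = (false :: (u ++ [true]) ++ r)[i]? := by
    rw [hr, List.getElem?_drop]
  have hdepth (m : ℕ) (hm : m ≤ u.length + 2) :
      parenDepth x (p + m) = parenDepth x p + parenDepth (false :: (u ++ [true])) m := by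
    rw [parenDepth_add, ← hr, parenDepth_append_of_le _ (by simpa using hm)]
  refine ⟨by omega, by omega, by simpa using hget 0, ?_, ?_, ?_⟩
  · simpa [Nat.add_assoc] using hget (u.length + 1)
  · have hzero : parenDepth (false :: (u ++ [true])) (u.length + 2) = 0 := by
      simpa using hu.cons_false_append_true.parenDepth_length
    rw [show p + u.length + 1 + 1 = p + (u.length + 2) by omega, hdepth _ le_rfl, hzero, add_zero]
  · intro k hpk hkq
    obtain ⟨m, rfl⟩ : ∃ m, k = p + (m + 1) := ⟨k - p - 1, by omega⟩
    rw [hdepth _ (by omega), parenDepth_cons_false_succ, parenDepth_append_of_le _ (by omega)]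
    linarith [hu.parenDepth_nonneg m]

end Parentheses

namespace OTree

@[induction_eliminator]
theorem induction {motive : OTree → Prop}
    (node : ∀ cs : List OTree, (∀ c ∈ cs, motive c) → motive (.node cs)) : ∀ t, motive t
  | .node cs => node cs fun c _ => induction node c
decreasing_by
  have := List.sizeOf_lt_of_mem (by assumption : c ∈ cs)
  simp only [OTree.node.sizeOf_spec]; omega

def edgeBp (t : OTree) : List Bool := false :: (t.bp ++ [true])

theorem size_node (cs : List OTree) : (node cs).size = 1 + (cs.map size).sum := by
  rw [size, ← List.attach_map_val (l := cs) (f := size)]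

theorem bp_node (cs : List OTree) : (node cs).bp = (cs.map edgeBp).flatten := by
  rw [bp, ← List.attach_map_val (l := cs) (f := edgeBp)]; rfl

theorem preorderList_node (cs : List OTree) :
    (node cs).preorderList = node cs :: (cs.map preorderList).flatten := by
  rw [preorderList, ← List.attach_map_val (l := cs) (f := preorderList)]

theorem length_preorderList (t : OTree) : t.preorderList.length = t.size := by
  induction t with
  | node cs ih =>
    rw [preorderList_node, size_node, List.length_cons, List.length_flatten, List.map_map,
      add_comm, List.map_congr_left (f := List.length ∘ preorderList) ih]

theorem count_false_edgeBp (t : OTree) : t.edgeBp.count false = t.preorderList.length := by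
  induction t with
  | node cs ih =>
    simp only [edgeBp, bp_node, preorderList_node, List.count_cons_self, List.count_append,
      List.count_flatten, List.length_cons, List.length_flatten, List.map_map, List.count_singleton]
    rw [List.map_congr_left (f := List.count false ∘ edgeBp) ih]
    rfl


def EdgeSegments (bs : List Bool) (vs : List OTree) : Prop :=
  ∀ k (hk : k < vs.length), ∃ p, (bs.take p).count false = k ∧ vs[k].edgeBp <+: bs.drop p

theorem EdgeSegments.append_right {bs : List Bool} {vs : List OTree} (h : EdgeSegments bs vs)
    (bs' : List Bool) : EdgeSegments (bs ++ bs') vs := by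
  intro k hk
  obtain ⟨p, hcount, r, hr⟩ := h k hk
  have hp : p ≤ bs.length := by
    by_contra hlt
    simp [List.drop_of_length_le (by omega : bs.length ≤ p), edgeBp] at hr
  refine ⟨p, by rw [List.take_append_of_le_length hp, hcount], r ++ bs', ?_⟩
  rw [List.drop_append_of_le_length hp, ← hr, List.append_assoc]

theorem EdgeSegments.append {bs₁ bs₂ : List Bool} {vs₁ vs₂ : List OTree}
    (h₁ : EdgeSegments (bs₁ ++ bs₂) vs₁) (h₂ : EdgeSegments bs₂ vs₂)
    (hcount : bs₁.count false = vs₁.length) : EdgeSegments (bs₁ ++ bs₂) (vs₁ ++ vs₂) := by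
  intro k hk
  rcases lt_or_ge k vs₁.length with hk₁ | hk₁
  · obtain ⟨p, hp, hpre⟩ := h₁ k hk₁
    exact ⟨p, hp, by rwa [List.getElem_append_left hk₁]⟩
  · obtain ⟨p, hp, hpre⟩ := h₂ (k - vs₁.length) (by simp at hk; omega)
    refine ⟨bs₁.length + p, ?_, ?_⟩
    · rw [List.take_length_add_append, List.count_append, hp, hcount]; omega
    · rwa [List.getElem_append_right hk₁, List.drop_length_add_append]

theorem edgeSegments_flatten {cs : List OTree}
    (h : ∀ c ∈ cs, EdgeSegments c.edgeBp c.preorderList) :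
    EdgeSegments (cs.map edgeBp).flatten (cs.map preorderList).flatten := by
  induction cs with
  | nil => intro k hk; simp at hk
  | cons c cs ih =>
    simp only [List.map_cons, List.flatten_cons]
    exact ((h c List.mem_cons_self).append_right _).append
      (ih fun d hd => h d (List.mem_cons_of_mem c hd)) (count_false_edgeBp c)

theorem edgeSegments_edgeBp (t : OTree) : EdgeSegments t.edgeBp t.preorderList := by
  induction t with
  | node cs ih =>
    have hbp : (node cs).edgeBp = [false] ++ ((cs.map edgeBp).flatten ++ [true]) := by
      rw [edgeBp, bp_node]; rfl
    have hroot : EdgeSegments ([false] ++ ((cs.map edgeBp).flatten ++ [true])) [node cs] := by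
      intro k hk
      obtain rfl : k = 0 := by simpa using hk
      exact ⟨0, rfl, hbp ▸ List.prefix_refl _⟩
    rw [hbp, preorderList_node]
    exact hroot.append ((edgeSegments_flatten ih).append_right [true]) rfl

theorem balancedSeq_bp (t : OTree) : BalancedSeq t.bp := by
  induction t with
  | node cs ih =>
    rw [bp_node]
    refine .flatten fun u hu => ?_
    obtain ⟨c, hc, rfl⟩ := List.mem_map.1 hu
    exact (ih c hc).cons_false_append_true

end OTree

/-- In the balanced-parentheses sequence `B` of a rooted ordered tree, the
position `select_0(v-1)` (here: the 0-indexed position `p` of the `(v-1)`-th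
`0`) is the opening parenthesis of the edge from `v`'s parent into the `v`-th
preorder vertex (`v ≥ 2`, the root being handled separately), and the subtree
of `v` corresponds exactly to the interval `[p, match(p)]`: that segment of `B`
is the parenthesization of `v`'s subtree. -/
theorem select_open_paren_and_subtree_interval (t : OTree) (v : ℕ)
    (hv2 : 2 ≤ v) (hvn : v ≤ t.size) (p : ℕ)
    (hp0 : (t.bp.take p).count false = v - 2)  -- p is the position of the (v-1)-th 0
    (hpbit : t.bp[p]? = some false) :
    ∃ q, MatchedPair t.bp p q ∧
      ∃ s, t.preorderList[v - 1]? = some s ∧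
        (t.bp.drop p).take (q + 1 - p) = false :: (s.bp ++ [true]) := by
  obtain ⟨cs⟩ := t
  have hk : v - 2 < ((cs.map OTree.preorderList).flatten).length := by
    have := OTree.length_preorderList (.node cs)
    rw [OTree.preorderList_node, List.length_cons] at this
    omega
  obtain ⟨p', hp'0, hpre⟩ :=
    OTree.edgeSegments_flatten (fun c _ => OTree.edgeSegments_edgeBp c) (v - 2) hk
  rw [← OTree.bp_node] at hp'0 hpre
  set s := ((cs.map OTree.preorderList).flatten)[v - 2]
  have hmatch := matchedPair_of_prefix s.balancedSeq_bp hpre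
  obtain rfl : p = p' := eq_of_count_false_take_eq hpbit hmatch.2.2.1 (hp0.trans hp'0.symm)
  refine ⟨p + s.bp.length + 1, hmatch, s, ?_, ?_⟩
  · rw [OTree.preorderList_node, show v - 1 = v - 2 + 1 by omega, List.getElem?_cons_succ,
      List.getElem?_eq_getElem hk]
  · rw [show p + s.bp.length + 1 + 1 - p = s.edgeBp.length by simp [OTree.edgeBp]; omega]
    exact (List.prefix_iff_eq_take.1 hpre).symm
end

section
/- Let G be a connected graph and let each vertex be assigned a parent pointer by any procedure with the property that whenever a vertex v ≠ r is assigned parent u, the vertex u already has a path of parent pointers reaching the root r. Then the resulting parent-pointer structure is a spanning tree of G rooted at r (i.e., the parent pointers contain no cycle and every vertex reaches r). -/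
/-!
Every vertex reaches `r` by following parent pointers: a vertex `v ≠ r` does so through its
parent. The tree edges then connect every vertex to `r`. Each edge `v — parent v` is a bridge:
the descendants of `v` are closed under all other tree edges, while `parent v` is not a
descendant of `v`, for otherwise `v` would be a periodic point and could never reach the fixed
point `r`.
-/

open Function SimpleGraph

namespace ParentPointer

variable {V : Type*}

def graph (f : V → V) (r : V) : SimpleGraph V :=
  fromEdgeSet {e | ∃ v, v ≠ r ∧ e = s(v, f v)}

variable {f : V → V} {r : V}

theorem eq_of_isPeriodicPt_of_iterate_eq (hroot : f r = r) {v : V} {m n : ℕ} (hm : 0 < m)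
    (hper : IsPeriodicPt f m v) (hn : f^[n] v = r) : v = r :=
  calc v = f^[n * m] v := (hper.const_mul n).eq.symm
    _ = f^[n * m - n] (f^[n] v) := by
      rw [← iterate_add_apply, Nat.sub_add_cancel (Nat.le_mul_of_pos_right n hm)]
    _ = r := by rw [hn, iterate_fixed hroot]

theorem not_exists_iterate_apply_eq_self (hroot : f r = r) {v : V} (hv : v ≠ r)
    (hreach : ∃ n, f^[n] v = r) : ¬ ∃ k, f^[k] (f v) = v := by
  rintro ⟨k, hk⟩
  obtain ⟨n, hn⟩ := hreach
  exact hv (eq_of_isPeriodicPt_of_iterate_eq hroot k.succ_pos hk hn)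

theorem exists_iterate_apply_eq_iff {v w : V} (hw : w ≠ v) :
    (∃ k, f^[k] (f w) = v) ↔ ∃ k, f^[k] w = v := by
  constructor
  · rintro ⟨k, hk⟩
    exact ⟨k + 1, hk⟩
  · rintro ⟨_ | k, hk⟩
    · exact absurd hk hw
    · exact ⟨k, hk⟩

theorem exists_iterate_eq_iff_of_adj_deleteEdges {v a b : V}
    (h : ((graph f r).deleteEdges {s(v, f v)}).Adj a b) :
    (∃ k, f^[k] a = v) ↔ ∃ k, f^[k] b = v := by
  obtain ⟨⟨⟨w, -, hab⟩, -⟩, hne⟩ := deleteEdges_adj.mp h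
  have hwv : w ≠ v := by
    rintro rfl
    exact hne hab
  rcases Sym2.eq_iff.mp hab with ⟨rfl, rfl⟩ | ⟨rfl, rfl⟩
  · exact (exists_iterate_apply_eq_iff hwv).symm
  · exact exists_iterate_apply_eq_iff hwv

theorem exists_iterate_eq_iff_of_reachable_deleteEdges {v a b : V}
    (h : ((graph f r).deleteEdges {s(v, f v)}).Reachable a b) :
    (∃ k, f^[k] a = v) ↔ ∃ k, f^[k] b = v := by
  have hpath := (reachable_iff_reflTransGen a b).mp h
  clear h
  induction hpath with
  | refl => rfl
  | tail _ hbc ih => exact ih.trans (exists_iterate_eq_iff_of_adj_deleteEdges hbc)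

theorem isBridge_graph (hroot : f r = r) {v : V} (hv : v ≠ r) (hreach : ∃ n, f^[n] v = r) :
    (graph f r).IsBridge s(v, f v) := fun h =>
  not_exists_iterate_apply_eq_self hroot hv hreach
    ((exists_iterate_eq_iff_of_reachable_deleteEdges h).mp ⟨0, rfl⟩)

theorem isAcyclic_graph (hroot : f r = r) (hreach : ∀ v, ∃ n, f^[n] v = r) :
    (graph f r).IsAcyclic := by
  rw [isAcyclic_iff_forall_isBridge, graph, edgeSet_fromEdgeSet]
  rintro _ ⟨⟨v, hv, rfl⟩, -⟩
  exact isBridge_graph hroot hv (hreach v)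

theorem reachable_apply (hroot : f r = r) (x : V) : (graph f r).Reachable x (f x) := by
  by_cases hx : x = f x
  · exact hx ▸ Reachable.refl x
  · have hxr : x ≠ r := by
      rintro rfl
      exact hx hroot.symm
    exact Adj.reachable ((fromEdgeSet_adj _).mpr ⟨⟨x, hxr, rfl⟩, hx⟩)

theorem reachable_iterate (hroot : f r = r) (x : V) (k : ℕ) :
    (graph f r).Reachable x (f^[k] x) := by
  induction k with
  | zero => rfl
  | succ k ih =>
    rw [iterate_succ_apply']
    exact ih.trans (reachable_apply hroot _)

theorem connected_graph (hroot : f r = r) (hreach : ∀ v, ∃ n, f^[n] v = r) :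
    (graph f r).Connected := by
  have hroot_reach (v : V) : (graph f r).Reachable v r := by
    obtain ⟨n, hn⟩ := hreach v
    exact hn ▸ reachable_iterate hroot v n
  exact connected_iff _ |>.mpr ⟨fun u v => (hroot_reach u).trans (hroot_reach v).symm, ⟨r⟩⟩

theorem isTree_graph (hroot : f r = r) (hreach : ∀ v, ∃ n, f^[n] v = r) :
    (graph f r).IsTree :=
  ⟨connected_graph hroot hreach, isAcyclic_graph hroot hreach⟩

theorem graph_le {G : SimpleGraph V} (hadj : ∀ v, v ≠ r → G.Adj (f v) v) : graph f r ≤ G := by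
  intro a b h
  obtain ⟨⟨v, hv, hab⟩, -⟩ := (fromEdgeSet_adj _).mp h
  rw [← G.mem_edgeSet, hab]
  exact (hadj v hv).symm

end ParentPointer

theorem parent_pointers_spanning_tree_general {V : Type*}
    (G : SimpleGraph V) (r : V)
    (parent : V → V) (τ : V → ℕ)
    (hroot : parent r = r)
    (hadj : ∀ v, v ≠ r → G.Adj (parent v) v)
    (hrace : ∀ v, v ≠ r → ∃ k, parent^[k] (parent v) = r ∧
      ∀ j < k, τ (parent^[j] (parent v)) < τ v) :
    (∀ v, ∃ k, parent^[k] v = r) ∧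
    (SimpleGraph.fromEdgeSet {e | ∃ v, v ≠ r ∧ e = s(v, parent v)}).IsTree ∧
    SimpleGraph.fromEdgeSet {e | ∃ v, v ≠ r ∧ e = s(v, parent v)} ≤ G := by
  have hreach (v : V) : ∃ k, parent^[k] v = r := by
    by_cases hv : v = r
    · exact ⟨0, hv⟩
    · obtain ⟨k, hk, -⟩ := hrace v hv
      exact ⟨k + 1, hk⟩
  exact ⟨hreach, ParentPointer.isTree_graph hroot hreach, ParentPointer.graph_le hadj⟩

/-- Benign race condition in Bader–Cong's parallel spanning tree algorithm:
let `G` be a connected graph, `r` a root, and suppose every vertex `v ≠ r` is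
assigned (at time `τ v`) a parent `parent v` adjacent to it such that, at the
moment of assignment, the parent already has a path of parent pointers (all
assigned earlier) reaching `r`. Then the parent pointers contain no cycle,
every vertex reaches `r`, and the resulting parent-pointer structure is a
spanning tree of `G` rooted at `r`. -/
theorem parent_pointers_spanning_tree {V : Type*} [Fintype V] [DecidableEq V]
    (G : SimpleGraph V) (hG : G.Connected) (r : V)
    (parent : V → V) (τ : V → ℕ)
    (hroot : parent r = r)
    (hadj : ∀ v, v ≠ r → G.Adj (parent v) v)
    (hrace : ∀ v, v ≠ r → ∃ k, parent^[k] (parent v) = r ∧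
      ∀ j < k, τ (parent^[j] (parent v)) < τ v) :
    (∀ v, ∃ k, parent^[k] v = r) ∧
    (SimpleGraph.fromEdgeSet {e | ∃ v, v ≠ r ∧ e = s(v, parent v)}).IsTree ∧
    SimpleGraph.fromEdgeSet {e | ∃ v, v ≠ r ∧ e = s(v, parent v)} ≤ G :=
  parent_pointers_spanning_tree_general G r parent τ hroot hadj hrace
end

section
/- In an Euler tour of a rooted ordered tree encoded as a successor function on the 2(n-1) directed edge-visits (as in the parallel construction: the successor of a downward edge into a leaf is the corresponding upward edge; the successor of a downward edge into an internal vertex is the first downward edge to its first child; the successor of an upward edge is the next sibling edge or the upward edge to the grandparent), the successor function defines a single cycle through all 2(n-1) edge-visits. -/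
open Finset

/-!
Read recursively, the Euler tour of the subtree at `v` is the list `(v, false)`, then the tours
of the children of `v` in order, then `(v, true)`. Consecutive entries of this list are related
by `eulerSucc`: a downward visit is followed by the tour of the first child (or by the upward
visit at a leaf), a child's tour ends with its upward visit, whose successor starts the next
sibling's tour or, after the last child, is the upward visit of `v`. Concatenating the tours of
the children of the root gives a list containing every edge-visit, and `eulerSucc` maps its last
entry back to its first, so it is a single cycle.
-/

/-- The element following `v` in the list `l` (the next sibling), if any. -/
def nextAfter {V : Type*} [DecidableEq V] (l : List V) (v : V) : Option V :=
  ((l.dropWhile (fun x => x ≠ v)).drop 1).head?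

/-- The successor function on directed edge-visits of a rooted ordered tree
(given by its root `r`, parent pointers and ordered child lists), as in the
parallel Euler tour construction.  An edge-visit is a pair `(v, b)` with
`v ≠ r`: `(v, false)` is the downward traversal of the edge into `v`, and
`(v, true)` the upward traversal from `v` back to its parent.
The successor of a downward edge into a leaf is the corresponding upward edge;
the successor of a downward edge into an internal vertex is the downward edge
to its first child; the successor of an upward edge is the downward edge to
the next sibling, or the upward edge to the grandparent, or (for the last
edge of the tour) the first downward edge out of the root. -/
def eulerSucc {V : Type*} [DecidableEq V] (r : V) (parent : V → V)
    (childSeq : V → List V) : V × Bool → V × Bool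
  | (v, false) =>
      match childSeq v with
      | [] => (v, true)
      | c :: _ => (c, false)
  | (v, true) =>
      match nextAfter (childSeq (parent v)) v with
      | some w => (w, false)
      | none =>
          if parent v = r then
            match childSeq r with
            | c :: _ => (c, false)
            | [] => (v, true)
          else (parent v, true)

section ListCycle

variable {α β : Type*}

lemma iterate_getElem_of_isChain {f : α → α} {l : List α}
    (hl : l.IsChain (fun a b => f a = b)) {i j : ℕ} (hij : i ≤ j) (hj : j < l.length) :
    f^[j - i] l[i] = l[j] := by
  induction j, hij using Nat.le_induction with
  | base => simp
  | succ j hij ih =>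
    rw [show j + 1 - i = (j - i) + 1 by omega, Function.iterate_succ_apply',
      ih (by omega), hl.getElem j hj]

lemma exists_iterate_eq_of_isChain {f : α → α} {l : List α}
    (hl : l.IsChain (fun a b => f a = b)) (hwrap : ∀ x ∈ l.getLast?, ∀ y ∈ l.head?, f x = y)
    {a b : α} (ha : a ∈ l) (hb : b ∈ l) : ∃ k, f^[k] a = b := by
  obtain ⟨i, hi, rfl⟩ := List.getElem_of_mem ha
  obtain ⟨j, hj, rfl⟩ := List.getElem_of_mem hb
  rcases le_or_gt i j with hij | hji
  · exact ⟨j - i, iterate_getElem_of_isChain hl hij hj⟩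
  · have hlast : f^[l.length - 1 - i] l[i] = l[l.length - 1] :=
      iterate_getElem_of_isChain hl (by omega) (by omega)
    have hturn : f l[l.length - 1] = l[0] :=
      hwrap _ (by simp [List.getLast?_eq_getElem?]) _ (by simp [List.head?_eq_getElem?])
    refine ⟨j + 1 + (l.length - 1 - i), ?_⟩
    rw [Function.iterate_add_apply, Function.iterate_add_apply, hlast, Function.iterate_one,
      hturn]
    simpa using iterate_getElem_of_isChain hl (Nat.zero_le j) hj

lemma head?_flatMap_of_forall_head? {l : List β} {g : β → List α} {φ : β → α}
    (hg : ∀ b ∈ l, (g b).head? = some (φ b)) : (l.flatMap g).head? = l.head?.map φ := by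
  cases l with
  | nil => rfl
  | cons b l => simp [hg b List.mem_cons_self]

lemma getLast?_flatMap_of_forall_getLast? {l : List β} {g : β → List α} {ψ : β → α}
    (hg : ∀ b ∈ l, (g b).getLast? = some (ψ b)) : (l.flatMap g).getLast? = l.getLast?.map ψ := by
  rcases l.eq_nil_or_concat with rfl | ⟨l, b, rfl⟩
  · rfl
  · simp [hg b (by simp)]

lemma isChain_flatMap_of_forall {R : α → α → Prop} {l : List β} {g : β → List α} {φ ψ : β → α}
    (hhead : ∀ b ∈ l, (g b).head? = some (φ b)) (hlast : ∀ b ∈ l, (g b).getLast? = some (ψ b))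
    (hg : ∀ b ∈ l, (g b).IsChain R) (hl : l.IsChain (fun b b' => R (ψ b) (φ b'))) :
    (l.flatMap g).IsChain R := by
  have hne : [] ∉ l.map g := fun h => by
    obtain ⟨b, hb, hgb⟩ := List.mem_map.mp h
    simpa [hgb] using hhead b hb
  rw [List.flatMap_def, List.isChain_flatten hne, List.isChain_map]
  refine ⟨by simpa using hg, hl.imp_of_mem_imp fun b b' hb hb' hR => ?_⟩
  simpa [hlast b hb, hhead b' hb'] using hR

end ListCycle

section NextAfter

variable {V : Type*} [DecidableEq V]

lemma nextAfter_append_cons (l rest : List V) {c : V} (hc : c ∉ l) :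
    nextAfter (l ++ c :: rest) c = rest.head? := by
  induction l with
  | nil => simp [nextAfter]
  | cons a l ih =>
    rw [List.mem_cons, not_or] at hc
    simpa [nextAfter, List.dropWhile_cons, Ne.symm hc.1] using ih hc.2

lemma mem_of_nextAfter_eq_some {l : List V} {v w : V} (h : nextAfter l v = some w) : w ∈ l :=
  (l.dropWhile_sublist _).subset (List.mem_of_mem_drop (List.mem_of_mem_head? h))

lemma nextAfter_eq_none_of_getLast? {l : List V} {c : V} (hl : l.Nodup)
    (hc : l.getLast? = some c) : nextAfter l c = none := by
  obtain ⟨l, rfl⟩ := List.getLast?_eq_some_iff.mp hc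
  have hcl : c ∉ l := fun h => (List.nodup_append.mp hl).2.2 c h c List.mem_cons_self rfl
  exact nextAfter_append_cons l [] hcl

end NextAfter

section RootedTree

variable {V : Type*} {r : V} {parent : V → V} {childSeq : V → List V}

def HeightLt (parent : V → V) (v : V) (h : ℕ) : Prop :=
  ∀ u k, parent^[k] u = v → k < h

lemma HeightLt.pos {v : V} {h : ℕ} (H : HeightLt parent v h) : 0 < h := H v 0 rfl

lemma HeightLt.of_parent_eq {v c : V} {h : ℕ} (H : HeightLt parent v (h + 1))
    (hc : parent c = v) : HeightLt parent c h := fun u k hu =>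
  Nat.lt_of_succ_lt_succ (H u (k + 1) (by rw [Function.iterate_succ_apply', hu, hc]))

lemma exists_heightLt [Finite V] (hroot : parent r = r) (htree : ∀ v, ∃ k, parent^[k] v = r) :
    ∃ h, ∀ v, v ≠ r → HeightLt parent v h := by
  choose m hm using htree
  obtain ⟨N, hN⟩ := Finite.exists_le m
  refine ⟨N + 1, fun v hv u k hk => ?_⟩
  by_contra! hNk
  apply hv
  rw [← hk, show k = (k - m u) + m u by grind, Function.iterate_add_apply, hm,
    Function.iterate_fixed hroot]

lemma exists_iterate_mem_childSeq_root
    (hchild : ∀ u v : V, u ∈ childSeq v ↔ (u ≠ r ∧ parent u = v)) {u : V} (hu : u ≠ r) :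
    ∀ {k : ℕ}, parent^[k] u = r → ∃ j, parent^[j] u ∈ childSeq r
  | 0, hk => (hu hk).elim
  | k + 1, hk => by
    by_cases h : parent^[k] u = r
    · exact exists_iterate_mem_childSeq_root hchild hu h
    · exact ⟨k, (hchild _ _).mpr ⟨h, by rwa [Function.iterate_succ_apply'] at hk⟩⟩

/-- The Euler tour of the subtree at `v`, with fuel `h`: it is the complete tour as soon as
`HeightLt parent v h`. -/
def subtreeTour (childSeq : V → List V) : ℕ → V → List (V × Bool)
  | 0, _ => []
  | h + 1, v => (v, false) :: ((childSeq v).flatMap (subtreeTour childSeq h) ++ [(v, true)])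

lemma head?_subtreeTour {h : ℕ} (hh : 0 < h) (v : V) :
    (subtreeTour childSeq h v).head? = some (v, false) := by
  obtain ⟨h, rfl⟩ := Nat.exists_eq_add_one.mpr hh
  rfl

lemma getLast?_subtreeTour {h : ℕ} (hh : 0 < h) (v : V) :
    (subtreeTour childSeq h v).getLast? = some (v, true) := by
  obtain ⟨h, rfl⟩ := Nat.exists_eq_add_one.mpr hh
  rw [subtreeTour, ← List.cons_append, List.getLast?_concat]

lemma mem_subtreeTour (hroot : parent r = r)
    (hchild : ∀ u v : V, u ∈ childSeq v ↔ (u ≠ r ∧ parent u = v)) (b : Bool) :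
    ∀ {h k : ℕ} {u v : V}, v ≠ r → HeightLt parent v h → parent^[k] u = v →
      (u, b) ∈ subtreeTour childSeq h v
  | 0, _, _, _, _, H, _ => (lt_irrefl 0 H.pos).elim
  | h + 1, 0, _, _, _, _, rfl => by cases b <;> simp [subtreeTour]
  | h + 1, k + 1, u, v, hv, H, hk => by
    have hcv : parent (parent^[k] u) = v := by rwa [Function.iterate_succ_apply'] at hk
    have hcr : parent^[k] u ≠ r := fun hcr => hv (by rw [← hcv, hcr, hroot])
    have hc : parent^[k] u ∈ childSeq v := (hchild _ v).mpr ⟨hcr, hcv⟩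
    simp only [subtreeTour, List.mem_cons, List.mem_append, List.mem_flatMap]
    exact Or.inr (Or.inl ⟨_, hc, mem_subtreeTour hroot hchild b hcr (H.of_parent_eq hcv) rfl⟩)

def eulerTour (r : V) (childSeq : V → List V) (h : ℕ) : List (V × Bool) :=
  (childSeq r).flatMap (subtreeTour childSeq h)

lemma mem_eulerTour (hroot : parent r = r)
    (hchild : ∀ u v : V, u ∈ childSeq v ↔ (u ≠ r ∧ parent u = v))
    (htree : ∀ v, ∃ k, parent^[k] v = r) {h : ℕ} (hh : ∀ v, v ≠ r → HeightLt parent v h)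
    {a : V × Bool} (ha : a.1 ≠ r) : a ∈ eulerTour r childSeq h := by
  obtain ⟨u, b⟩ := a
  obtain ⟨j, hj⟩ := exists_iterate_mem_childSeq_root hchild ha (htree u).choose_spec
  have hjr : parent^[j] u ≠ r := ((hchild _ r).mp hj).1
  exact List.mem_flatMap.mpr ⟨_, hj, mem_subtreeTour hroot hchild b hjr (hh _ hjr) rfl⟩

end RootedTree

section EulerSucc

variable {V : Type*} [DecidableEq V] {r : V} {parent : V → V} {childSeq : V → List V}

lemma isChain_eulerSucc_siblings (hchild : ∀ u v : V, u ∈ childSeq v ↔ (u ≠ r ∧ parent u = v))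
    (hnodup : ∀ v : V, (childSeq v).Nodup) (p : V) :
    (childSeq p).IsChain fun c c' => eulerSucc r parent childSeq (c, true) = (c', false) := by
  refine List.isChain_iff_forall_rel_of_append_cons_cons.mpr fun c c' l₁ l₂ hp => ?_
  have hcp : parent c = p := ((hchild c p).mp (by simp [hp])).2
  have hcl : c ∉ l₁ := by
    have := hnodup p
    rw [hp] at this
    exact fun h => (List.nodup_append.mp this).2.2 c h c List.mem_cons_self rfl
  have hnext : nextAfter (childSeq (parent c)) c = some c' := by
    rw [hcp, hp, nextAfter_append_cons _ _ hcl]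
    rfl
  simp [eulerSucc, hnext]

lemma eulerSucc_up_getLast?_of_ne_root
    (hchild : ∀ u v : V, u ∈ childSeq v ↔ (u ≠ r ∧ parent u = v))
    (hnodup : ∀ v : V, (childSeq v).Nodup) {v c : V} (hv : v ≠ r)
    (hc : (childSeq v).getLast? = some c) :
    eulerSucc r parent childSeq (c, true) = (v, true) := by
  have hcv : parent c = v := ((hchild c v).mp (List.mem_of_getLast? hc)).2
  simp [eulerSucc, hcv, nextAfter_eq_none_of_getLast? (hnodup v) hc, hv]

lemma eulerSucc_up_getLast?_root (hchild : ∀ u v : V, u ∈ childSeq v ↔ (u ≠ r ∧ parent u = v))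
    (hnodup : ∀ v : V, (childSeq v).Nodup) {c c₀ : V}
    (hc : (childSeq r).getLast? = some c) (hc₀ : (childSeq r).head? = some c₀) :
    eulerSucc r parent childSeq (c, true) = (c₀, false) := by
  have hcr : parent c = r := ((hchild c r).mp (List.mem_of_getLast? hc)).2
  obtain ⟨l, hl⟩ := List.head?_eq_some_iff.mp hc₀
  simp only [eulerSucc, hcr, nextAfter_eq_none_of_getLast? (hnodup r) hc]
  simp [hl]

lemma eulerSucc_fst_ne_root (hchild : ∀ u v : V, u ∈ childSeq v ↔ (u ≠ r ∧ parent u = v))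
    {a : V × Bool} (ha : a.1 ≠ r) : (eulerSucc r parent childSeq a).1 ≠ r := by
  have child_ne : ∀ {c v}, c ∈ childSeq v → c ≠ r := fun h => ((hchild _ _).mp h).1
  obtain ⟨v, _ | _⟩ := a
  · cases h : childSeq v with
    | nil => simpa [eulerSucc, h] using ha
    | cons c _ => simpa [eulerSucc, h] using child_ne (h ▸ List.mem_cons_self)
  · cases hn : nextAfter (childSeq (parent v)) v with
    | some w => simpa [eulerSucc, hn] using child_ne (mem_of_nextAfter_eq_some hn)
    | none =>
      simp only [eulerSucc, hn]
      by_cases hp : parent v = r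
      · cases h : childSeq r with
        | nil => simpa [hp, h] using ha
        | cons c _ => simpa [hp, h] using child_ne (h ▸ List.mem_cons_self)
      · simp [hp]

lemma isChain_flatMap_subtreeTour
    (hchild : ∀ u v : V, u ∈ childSeq v ↔ (u ≠ r ∧ parent u = v))
    (hnodup : ∀ v : V, (childSeq v).Nodup) {p : V} {h : ℕ}
    (hp : ∀ c ∈ childSeq p, HeightLt parent c h)
    (hchain : ∀ c ∈ childSeq p,
      (subtreeTour childSeq h c).IsChain fun a b => eulerSucc r parent childSeq a = b) :
    ((childSeq p).flatMap (subtreeTour childSeq h)).IsChain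
      fun a b => eulerSucc r parent childSeq a = b :=
  isChain_flatMap_of_forall (fun c hc => head?_subtreeTour (hp c hc).pos c)
    (fun c hc => getLast?_subtreeTour (hp c hc).pos c) hchain
    (isChain_eulerSucc_siblings hchild hnodup p)

lemma isChain_subtreeTour
    (hchild : ∀ u v : V, u ∈ childSeq v ↔ (u ≠ r ∧ parent u = v))
    (hnodup : ∀ v : V, (childSeq v).Nodup) :
    ∀ {h : ℕ} {v : V}, v ≠ r → HeightLt parent v h →
      (subtreeTour childSeq h v).IsChain fun a b => eulerSucc r parent childSeq a = b
  | 0, _, _, H => (lt_irrefl 0 H.pos).elim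
  | h + 1, v, hv, H => by
    have hkids : ∀ c ∈ childSeq v, c ≠ r ∧ HeightLt parent c h := fun c hc =>
      ⟨((hchild c v).mp hc).1, H.of_parent_eq ((hchild c v).mp hc).2⟩
    rw [subtreeTour, List.isChain_cons, List.isChain_append]
    refine ⟨?_, ?_, List.isChain_singleton _, ?_⟩
    · cases hcs : childSeq v with
      | nil => simp [eulerSucc, hcs]
      | cons c cs =>
        have hc := (hkids c (by simp [hcs])).2.pos
        simp [eulerSucc, hcs, head?_subtreeTour hc]
    · exact isChain_flatMap_subtreeTour hchild hnodup (fun c hc => (hkids c hc).2)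
        fun c hc => isChain_subtreeTour hchild hnodup (hkids c hc).1 (hkids c hc).2
    · intro x hx y hy
      rw [getLast?_flatMap_of_forall_getLast? fun c hc =>
        getLast?_subtreeTour (hkids c hc).2.pos c] at hx
      obtain ⟨c, hc, rfl⟩ := Option.map_eq_some_iff.mp hx
      obtain rfl : (v, true) = y := by simpa using hy
      exact eulerSucc_up_getLast?_of_ne_root hchild hnodup hv hc

lemma isChain_eulerTour (hchild : ∀ u v : V, u ∈ childSeq v ↔ (u ≠ r ∧ parent u = v))
    (hnodup : ∀ v : V, (childSeq v).Nodup) {h : ℕ} (hh : ∀ v, v ≠ r → HeightLt parent v h) :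
    (eulerTour r childSeq h).IsChain fun a b => eulerSucc r parent childSeq a = b := by
  have hkids : ∀ c ∈ childSeq r, c ≠ r := fun c hc => ((hchild c r).mp hc).1
  exact isChain_flatMap_subtreeTour hchild hnodup (fun c hc => hh c (hkids c hc))
    fun c hc => isChain_subtreeTour hchild hnodup (hkids c hc) (hh c (hkids c hc))

lemma eulerSucc_getLast?_eulerTour (hchild : ∀ u v : V, u ∈ childSeq v ↔ (u ≠ r ∧ parent u = v))
    (hnodup : ∀ v : V, (childSeq v).Nodup) {h : ℕ} (hh : ∀ v, v ≠ r → HeightLt parent v h) :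
    ∀ x ∈ (eulerTour r childSeq h).getLast?, ∀ y ∈ (eulerTour r childSeq h).head?,
      eulerSucc r parent childSeq x = y := by
  have hpos : ∀ c ∈ childSeq r, 0 < h := fun c hc => (hh c ((hchild c r).mp hc).1).pos
  intro x hx y hy
  rw [eulerTour, getLast?_flatMap_of_forall_getLast? fun c hc => getLast?_subtreeTour (hpos c hc) c]
    at hx
  rw [eulerTour, head?_flatMap_of_forall_head? fun c hc => head?_subtreeTour (hpos c hc) c] at hy
  obtain ⟨c, hc, rfl⟩ := Option.map_eq_some_iff.mp hx
  obtain ⟨c₀, hc₀, rfl⟩ := Option.map_eq_some_iff.mp hy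
  exact eulerSucc_up_getLast?_root hchild hnodup hc hc₀

end EulerSucc

lemma card_filter_fst_ne {V : Type*} [Fintype V] [DecidableEq V] (r : V) :
    (univ.filter (fun a : V × Bool => a.1 ≠ r)).card = 2 * (Fintype.card V - 1) := by
  rw [show univ.filter (fun a : V × Bool => a.1 ≠ r) = (univ.erase r) ×ˢ univ by ext; simp,
    card_product, card_erase_of_mem (mem_univ r), card_univ, card_univ, Fintype.card_bool,
    mul_comm]

theorem eulerSucc_single_cycle_general {V : Type*} [Fintype V] [DecidableEq V]
    (r : V) (parent : V → V) (childSeq : V → List V)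
    (hroot : parent r = r)
    (hchild : ∀ u v : V, u ∈ childSeq v ↔ (u ≠ r ∧ parent u = v))
    (hnodup : ∀ v : V, (childSeq v).Nodup)
    (htree : ∀ v : V, ∃ k, parent^[k] v = r) :
    (univ.filter (fun a : V × Bool => a.1 ≠ r)).card = 2 * (Fintype.card V - 1) ∧
    (∀ a ∈ univ.filter (fun a : V × Bool => a.1 ≠ r),
      eulerSucc r parent childSeq a ∈ univ.filter (fun a : V × Bool => a.1 ≠ r)) ∧
    (∀ a ∈ univ.filter (fun a : V × Bool => a.1 ≠ r),
      ∀ b ∈ univ.filter (fun a : V × Bool => a.1 ≠ r),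
        ∃ k, (eulerSucc r parent childSeq)^[k] a = b) := by
  obtain ⟨h, hh⟩ := exists_heightLt hroot htree
  have hmem : ∀ a : V × Bool, a.1 ≠ r → a ∈ eulerTour r childSeq h :=
    fun _ => mem_eulerTour hroot hchild htree hh
  simp only [mem_filter, mem_univ, true_and]
  refine ⟨card_filter_fst_ne r, fun a ha => eulerSucc_fst_ne_root hchild ha, fun a ha b hb => ?_⟩
  exact exists_iterate_eq_of_isChain (isChain_eulerTour hchild hnodup hh)
    (eulerSucc_getLast?_eulerTour hchild hnodup hh) (hmem a ha) (hmem b hb)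

/-- In an Euler tour of a rooted ordered tree with `n ≥ 2` vertices, encoded as
the successor function on the `2(n-1)` directed edge-visits, the successor
function defines a single cycle through all `2(n-1)` edge-visits. -/
theorem eulerSucc_single_cycle {V : Type*} [Fintype V] [DecidableEq V]
    (r : V) (parent : V → V) (childSeq : V → List V)
    (hn : 2 ≤ Fintype.card V)
    (hroot : parent r = r)
    (hchild : ∀ u v : V, u ∈ childSeq v ↔ (u ≠ r ∧ parent u = v))
    (hnodup : ∀ v : V, (childSeq v).Nodup)
    (htree : ∀ v : V, ∃ k, parent^[k] v = r) :
    (univ.filter (fun a : V × Bool => a.1 ≠ r)).card = 2 * (Fintype.card V - 1) ∧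
    (∀ a ∈ univ.filter (fun a : V × Bool => a.1 ≠ r),
      eulerSucc r parent childSeq a ∈ univ.filter (fun a : V × Bool => a.1 ≠ r)) ∧
    (∀ a ∈ univ.filter (fun a : V × Bool => a.1 ≠ r),
      ∀ b ∈ univ.filter (fun a : V × Bool => a.1 ≠ r),
        ∃ k, (eulerSucc r parent childSeq)^[k] a = b) :=
  eulerSucc_single_cycle_general r parent childSeq hroot hchild hnodup htree
end
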